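/- Let W be a regular reachability or safety objective over C and M a chromatic memory structure. If M suffices to play optimally for W in all finite one-player arenas of Player 1, then W is M-progress-consistent. -/

import Mathlib

set_option autoImplicit false

namespace RegularMemory

/-- Concatenation of a finite word with an infinite word. -/
def wcat {C : Type} (w : List C) (x : ℕ → C) : ℕ → C := fun n =>
  if h : n < w.length then w.get ⟨n, h⟩ else x (n - w.length)

/-- The infinite word `w^ω` (junk value if `w` is empty). -/
noncomputable def wpow {C : Type} [Nonempty C] : List C → ℕ → C
  | [] => fun _ => Classical.arbitrary C
  | (a :: l) => fun n => (a :: l).get ⟨n % (a :: l).length, Nat.mod_lt n (Nat.succ_pos _)⟩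

/-- Winning continuations `w⁻¹W` of the finite word `w` for the objective `W`. -/
def contAfter {C : Type} (W : Set (ℕ → C)) (w : List C) : Set (ℕ → C) :=
  {x | wcat w x ∈ W}

/-- Prefix preorder `w₁ ⪯_W w₂`. -/
def prefLe {C : Type} (W : Set (ℕ → C)) (w₁ w₂ : List C) : Prop :=
  contAfter W w₁ ⊆ contAfter W w₂

/-- Strict prefix relation `w₁ ≺_W w₂`. -/
def prefLt {C : Type} (W : Set (ℕ → C)) (w₁ w₂ : List C) : Prop :=
  prefLe W w₁ w₂ ∧ ¬ prefLe W w₂ w₁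

/-- Comparability for the prefix preorder. -/
def PrefComparable {C : Type} (W : Set (ℕ → C)) (w₁ w₂ : List C) : Prop :=
  prefLe W w₁ w₂ ∨ prefLe W w₂ w₁

/-- The general reachability objective derived from `A`: infinite words with a prefix in `A`. -/
def ReachObj {C : Type} (A : Set (List C)) : Set (ℕ → C) :=
  {x | ∃ n : ℕ, (List.ofFn fun i : Fin n => x i) ∈ A}

/-- The general safety objective derived from `A`. -/
def SafeObj {C : Type} (A : Set (List C)) : Set (ℕ → C) :=
  (ReachObj A)ᶜ

/-- The prefix preorder of `W` has finitely many equivalence classes. -/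
def FinClasses {C : Type} (W : Set (ℕ → C)) : Prop :=
  (Set.range fun w : List C => contAfter W w).Finite

/-- The prefix preorder of `W` is well-founded:
every nonempty chain contains a minimal element. -/
def PrefWellFounded {C : Type} (W : Set (ℕ → C)) : Prop :=
  ∀ S : Set (List C), S.Nonempty →
    (∀ w₁ ∈ S, ∀ w₂ ∈ S, PrefComparable W w₁ w₂) →
    ∃ w₀ ∈ S, ∀ w ∈ S, ¬ prefLt W w w₀

/-- Chromatic memory structure. -/
structure MemStruct (C : Type) where
  M : Type
  init : M
  upd : M → C → M

/-- Extension of the update function to finite words. -/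
def MemStruct.updStar {C : Type} (N : MemStruct C) (m : N.M) (w : List C) : N.M :=
  w.foldl N.upd m

/-- The trivial one-state memory structure. -/
def trivMem (C : Type) : MemStruct C :=
  ⟨Unit, (), fun _ _ => ()⟩

/-- `W` is `N`-strongly-monotone. -/
def StronglyMonotone {C : Type} (N : MemStruct C) (W : Set (ℕ → C)) : Prop :=
  ∀ w₁ w₂ : List C,
    N.updStar N.init w₁ = N.updStar N.init w₂ → PrefComparable W w₁ w₂

/-- `W` is `N`-progress-consistent. -/
def ProgressConsistent {C : Type} [Nonempty C] (N : MemStruct C) (W : Set (ℕ → C)) : Prop :=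
  ∀ (m : N.M) (w₁ w₂ : List C),
    N.updStar N.init w₁ = m → N.updStar m w₂ = m →
    prefLt W w₁ (w₁ ++ w₂) → wcat w₁ (wpow w₂) ∈ W

/-- Two-player arena with colored edges; Player-1 vertices have outgoing edges
(so that strategies of Player 1 exist). -/
structure Arena (C : Type) where
  V : Type
  P1 : V → Prop
  E : Set (V × C × V)
  succ : ∀ v : V, P1 v → ∃ e ∈ E, e.1 = v

namespace Arena

/-- Valid histories starting at a given vertex. -/
def HistFrom {C : Type} (A : Arena C) : A.V → List (A.V × C × A.V) → Prop
  | _, [] => True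
  | v, e :: l => e ∈ A.E ∧ e.1 = v ∧ HistFrom A e.2.2 l

/-- Endpoint of a history. -/
def endFrom {C : Type} (A : Arena C) : A.V → List (A.V × C × A.V) → A.V
  | v, [] => v
  | _, e :: l => endFrom A e.2.2 l

/-- Infinite plays from a vertex. -/
def PlayFrom {C : Type} (A : Arena C) (v : A.V) (π : ℕ → A.V × C × A.V) : Prop :=
  (π 0).1 = v ∧ ∀ n : ℕ, π n ∈ A.E ∧ (π n).2.2 = (π (n + 1)).1

/-- Colors along a play. -/
def playCol {C V : Type} (π : ℕ → V × C × V) : ℕ → C :=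
  fun n => (π n).2.1

/-- Strategies of Player 1: on every valid history ending in a Player-1 vertex,
the strategy picks an edge leaving that vertex. -/
structure Strategy {C : Type} (A : Arena C) where
  next : A.V → List (A.V × C × A.V) → A.V × C × A.V
  legal : ∀ (v : A.V) (l : List (A.V × C × A.V)),
    A.HistFrom v l → A.P1 (A.endFrom v l) →
      next v l ∈ A.E ∧ (next v l).1 = A.endFrom v l

/-- A play from `v` is consistent with the strategy `σ`. -/
def Strategy.Consistent {C : Type} {A : Arena C} (σ : A.Strategy) (v : A.V)
    (π : ℕ → A.V × C × A.V) : Prop :=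
  ∀ n : ℕ, A.P1 (A.endFrom v (List.ofFn fun i : Fin n => π i)) →
    π n = σ.next v (List.ofFn fun i : Fin n => π i)

/-- `σ` is winning from `v` for the objective `W`. -/
def Strategy.WinningFrom {C : Type} {A : Arena C} (σ : A.Strategy)
    (W : Set (ℕ → C)) (v : A.V) : Prop :=
  ∀ π : ℕ → A.V × C × A.V, A.PlayFrom v π → σ.Consistent v π → playCol π ∈ W

/-- `σ` is optimal in `(A, W)`: winning from every vertex from which
Player 1 has some winning strategy. -/
def Strategy.Optimal {C : Type} {A : Arena C} (σ : A.Strategy) (W : Set (ℕ → C)) : Prop :=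
  ∀ v : A.V, (∃ σ' : A.Strategy, σ'.WinningFrom W v) → σ.WinningFrom W v

/-- `σ` is based on the memory structure `N`. -/
def Strategy.BasedOn {C : Type} {A : Arena C} (σ : A.Strategy) (N : MemStruct C) : Prop :=
  ∃ nxt : A.V → N.M → A.V × C × A.V,
    ∀ (v : A.V) (l : List (A.V × C × A.V)),
      A.HistFrom v l → A.P1 (A.endFrom v l) →
        σ.next v l = nxt (A.endFrom v l) (N.updStar N.init (l.map fun e => e.2.1))

/-- Finite arena: finitely many vertices and edges. -/
def IsFinite {C : Type} (A : Arena C) : Prop := Finite A.V ∧ A.E.Finite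

/-- Finitely branching arena. -/
def FinBranching {C : Type} (A : Arena C) : Prop :=
  ∀ v : A.V, {e ∈ A.E | e.1 = v}.Finite

/-- One-player arena of Player 1. -/
def OneP1 {C : Type} (A : Arena C) : Prop := ∀ v : A.V, A.P1 v

end Arena

/-- `N` suffices to play optimally for `W` in all arenas of the class `P`. -/
def SufficesIn {C : Type} (N : MemStruct C) (W : Set (ℕ → C))
    (P : Arena C → Prop) : Prop :=
  ∀ A : Arena C, P A → ∃ σ : A.Strategy, σ.BasedOn N ∧ σ.Optimal W

/-- Deterministic automaton (with complete transition function). -/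
structure DetAuto (C : Type) where
  Q : Type
  init : Q
  δ : Q → C → Q
  F : Set Q

/-- Extension of the transition function to finite words. -/
def DetAuto.δStar {C : Type} (D : DetAuto C) (q : D.Q) (w : List C) : D.Q :=
  w.foldl D.δ q

/-- Language recognized by `D`. -/
def DetAuto.lang {C : Type} (D : DetAuto C) : Set (List C) :=
  {w | D.δStar D.init w ∈ D.F}

/-- Prefix preorder extended to automaton states. -/
def statePrefLe {C : Type} (D : DetAuto C) (W : Set (ℕ → C)) (q₁ q₂ : D.Q) : Prop :=
  ∀ w₁ w₂ : List C,
    D.δStar D.init w₁ = q₁ → D.δStar D.init w₂ = q₂ → prefLe W w₁ w₂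

def statePrefLt {C : Type} (D : DetAuto C) (W : Set (ℕ → C)) (q₁ q₂ : D.Q) : Prop :=
  statePrefLe D W q₁ q₂ ∧ ¬ statePrefLe D W q₂ q₁

def StateComparable {C : Type} (D : DetAuto C) (W : Set (ℕ → C)) (q₁ q₂ : D.Q) : Prop :=
  statePrefLe D W q₁ q₂ ∨ statePrefLe D W q₂ q₁

/-- Monotone decomposition of `D` with `k` sets. -/
def MonotoneDecomposition {C : Type} (D : DetAuto C) (W : Set (ℕ → C))
    {k : ℕ} (Γ : Fin k → Set D.Q) : Prop :=
  (∀ q : D.Q, ∃ i : Fin k, q ∈ Γ i) ∧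
  (∀ (c : C) (i : Fin k), ∃ j : Fin k, (fun q => D.δ q c) '' Γ i ⊆ Γ j) ∧
  (∀ i : Fin k, ∀ q₁ ∈ Γ i, ∀ q₂ ∈ Γ i, StateComparable D W q₁ q₂)

end RegularMemory

/-!
Since `w₁ ≺ w₁w₂`, some continuation wins after `w₁w₂` but loses after `w₁`. Because the
objective is a regular reachability or safety objective, this continuation can be taken
ultimately periodic, `u y^ω`: along a safe word two prefixes have the same residual, and the
factor between them can be pumped without ever reaching the bad prefixes.

Now build the finite one-player arena made of a lasso reading `w₁ w₂^ω` and a lasso reading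
`u y^ω`, with one extra edge from the first vertex of the first loop into the second lasso.
Looping once and then exiting wins, so an optimal strategy based on `M` wins from the start.
Since `w₂` loops on the memory state `m` reached after `w₁`, this strategy meets the choice
vertex always in the state `m` and so always makes the same choice there. Exiting yields
`w₁ u y^ω`, which loses; hence it never exits, and its play `w₁ w₂^ω` wins.
-/

namespace RegularMemory

section Words

variable {C : Type}

theorem wcat_of_lt {w : List C} {x : ℕ → C} {n : ℕ} (h : n < w.length) :
    wcat w x n = w[n] := dif_pos h

theorem wcat_of_le {w : List C} {x : ℕ → C} {n : ℕ} (h : w.length ≤ n) :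
    wcat w x n = x (n - w.length) := dif_neg (by omega)

theorem wcat_append (w₁ w₂ : List C) (x : ℕ → C) :
    wcat (w₁ ++ w₂) x = wcat w₁ (wcat w₂ x) := by
  funext n
  rcases Nat.lt_or_ge n w₁.length with h₁ | h₁
  · rw [wcat_of_lt (by rw [List.length_append]; omega), wcat_of_lt h₁,
      List.getElem_append_left h₁]
  rw [wcat_of_le h₁]
  rcases Nat.lt_or_ge n (w₁.length + w₂.length) with h₂ | h₂
  · rw [wcat_of_lt (by rwa [List.length_append]), wcat_of_lt (by omega),
      List.getElem_append_right h₁]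
  · rw [wcat_of_le (by rwa [List.length_append]), wcat_of_le (by omega), List.length_append,
      Nat.sub_add_eq]

theorem wcat_eq_of_forall_lt {w : List C} {x x' : ℕ → C} {n : ℕ} (h : ∀ i < n, x i = x' i) :
    ∀ i < w.length + n, wcat w x i = wcat w x' i := by
  intro i hi
  rcases Nat.lt_or_ge i w.length with hw | hw
  · rw [wcat_of_lt hw, wcat_of_lt hw]
  · rw [wcat_of_le hw, wcat_of_le hw, h _ (by omega)]

theorem iterate_wcat_eq_of_lt (w : List C) (x x' : ℕ → C) :
    ∀ n, ∀ i < n * w.length, (wcat w)^[n] x i = (wcat w)^[n] x' i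
  | 0, _, hi => by omega
  | n + 1, i, hi => by
    rw [Function.iterate_succ_apply', Function.iterate_succ_apply']
    exact wcat_eq_of_forall_lt (iterate_wcat_eq_of_lt w x x' n) i (by rw [add_one_mul] at hi; omega)

theorem ofFn_congr_of_forall_lt {x x' : ℕ → C} {n : ℕ} (h : ∀ i < n, x i = x' i) :
    (List.ofFn fun i : Fin n => x i) = List.ofFn fun i : Fin n => x' i :=
  congrArg List.ofFn (funext fun i => h i i.isLt)

theorem ofFn_wcat (w : List C) (x : ℕ → C) (n : ℕ) :
    (List.ofFn fun i : Fin (w.length + n) => wcat w x i) =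
      w ++ List.ofFn fun i : Fin n => x i := by
  refine List.ext_getElem (by simp) fun i h₁ h₂ => ?_
  rw [List.getElem_ofFn]
  rcases Nat.lt_or_ge i w.length with hw | hw
  · rw [wcat_of_lt hw, List.getElem_append_left hw]
  · rw [wcat_of_le hw, List.getElem_append_right hw, List.getElem_ofFn]

theorem ofFn_wcat_length (w : List C) (x : ℕ → C) :
    (List.ofFn fun i : Fin w.length => wcat w x i) = w := by
  simpa using ofFn_wcat w x 0

theorem ofFn_wcat_ofFn (x y : ℕ → C) (k : ℕ) :
    (List.ofFn fun i : Fin k => wcat (List.ofFn fun j : Fin k => x j) y i) =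
      List.ofFn fun i : Fin k => x i :=
  ofFn_congr_of_forall_lt fun i hi => by rw [wcat_of_lt (by simpa using hi), List.getElem_ofFn]

theorem wcat_ofFn_shift (x : ℕ → C) (n : ℕ) :
    wcat (List.ofFn fun i : Fin n => x i) (fun i => x (n + i)) = x := by
  funext i
  rcases Nat.lt_or_ge i n with h | h
  · rw [wcat_of_lt (by simpa using h), List.getElem_ofFn]
  · rw [wcat_of_le (by simpa using h), List.length_ofFn]
    congr 1
    omega

theorem wcat_wpow_self [Nonempty C] {y : List C} (hy : y ≠ []) : wcat y (wpow y) = wpow y := by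
  obtain ⟨c, l, rfl⟩ := List.exists_cons_of_ne_nil hy
  funext n
  rcases Nat.lt_or_ge n (c :: l).length with h | h
  · rw [wcat_of_lt h]
    simp only [wpow, List.get_eq_getElem, Nat.mod_eq_of_lt h]
  · rw [wcat_of_le h]
    simp only [wpow, List.get_eq_getElem, ← Nat.mod_eq_sub_mod h]

theorem wpow_add_length [Nonempty C] {y : List C} (hy : y ≠ []) (n : ℕ) :
    wpow y (n + y.length) = wpow y n := by
  conv_lhs => rw [← wcat_wpow_self hy]
  rw [wcat_of_le (by omega), Nat.add_sub_cancel]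

end Words

theorem MemStruct.updStar_append {C : Type} (N : MemStruct C) (m : N.M) (l₁ l₂ : List C) :
    N.updStar m (l₁ ++ l₂) = N.updStar (N.updStar m l₁) l₂ :=
  List.foldl_append

theorem MemStruct.updStar_ofFn_succ {C : Type} (N : MemStruct C) (m : N.M) (x : ℕ → C) (n : ℕ) :
    N.updStar m (List.ofFn fun i : Fin (n + 1) => x i) =
      N.upd (N.updStar m (List.ofFn fun i : Fin n => x i)) (x n) := by
  rw [List.ofFn_succ', List.concat_eq_append, MemStruct.updStar, List.foldl_concat]
  rfl

section Safety

variable {C : Type}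

theorem mem_contAfter_append {W : Set (ℕ → C)} {w₁ w₂ : List C} {x : ℕ → C} :
    x ∈ contAfter W (w₁ ++ w₂) ↔ wcat w₂ x ∈ contAfter W w₁ := by
  simp only [contAfter, Set.mem_ofPred_eq, wcat_append]

theorem FinClasses.compl {W : Set (ℕ → C)} (h : FinClasses W) : FinClasses Wᶜ := by
  refine (h.image (·ᶜ)).subset ?_
  rintro _ ⟨w, rfl⟩
  exact ⟨contAfter W w, ⟨w, rfl⟩, rfl⟩

theorem mem_safeObj {A : Set (List C)} {x : ℕ → C} :
    x ∈ SafeObj A ↔ ∀ n, (List.ofFn fun i : Fin n => x i) ∉ A := by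
  simp [SafeObj, ReachObj]

theorem mem_safeObj_of_forall_exists {A : Set (List C)} {x : ℕ → C}
    (h : ∀ n, ∃ x' ∈ SafeObj A, ∀ i < n, x' i = x i) : x ∈ SafeObj A := by
  refine mem_safeObj.mpr fun n hn => ?_
  obtain ⟨x', hx', hagree⟩ := h n
  exact mem_safeObj.mp hx' n (by rwa [ofFn_congr_of_forall_lt hagree])

variable [Nonempty C]

theorem wcat_wpow_mem_safeObj {A : Set (List C)} {q y : List C} {x : ℕ → C} (hy : y ≠ [])
    (hle : prefLe (SafeObj A) q (q ++ y)) (hx : wcat (q ++ y) x ∈ SafeObj A) :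
    wcat q (wpow y) ∈ SafeObj A := by
  have hiter : ∀ k, (wcat y)^[k] (wcat y x) ∈ contAfter (SafeObj A) q := by
    intro k
    induction k with
    | zero => rwa [Function.iterate_zero_apply, mem_contAfter_append.symm]
    | succ k ih =>
      rw [Function.iterate_succ_apply']
      exact mem_contAfter_append.mp (hle ih)
  -- the safe word `q y^n (y x)` agrees with `q y^ω` on its first `n` letters
  refine mem_safeObj_of_forall_exists fun n => ⟨_, hiter n, fun i hi => ?_⟩
  rw [← Function.iterate_fixed (wcat_wpow_self hy) n]
  refine wcat_eq_of_forall_lt (iterate_wcat_eq_of_lt y _ _ n) i ?_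
  have := Nat.le_mul_of_pos_right n (List.length_pos_iff.mpr hy)
  omega

theorem exists_wcat_wpow_mem_safeObj {A : Set (List C)} (hreg : FinClasses (SafeObj A))
    {s : ℕ → C} (hs : s ∈ SafeObj A) (n₀ : ℕ) :
    ∃ i, n₀ ≤ i ∧ ∃ y ≠ [], wcat (List.ofFn fun t : Fin i => s t) (wpow y) ∈ SafeObj A := by
  -- two prefixes of `s` with the same residual; the factor between them is pumped
  obtain ⟨i, hi, j, hj, hne, heq⟩ := (Set.Ici_infinite n₀).exists_ne_map_eq_of_mapsTo
    (f := fun i => contAfter (SafeObj A) (List.ofFn fun t : Fin i => s t))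
    (t := Set.range fun w => contAfter (SafeObj A) w) (fun i _ => Set.mem_range_self _) hreg
  wlog hij : i < j generalizing i j
  · exact this j hj i hi hne.symm heq.symm (by omega)
  obtain ⟨d, rfl⟩ := Nat.exists_eq_add_of_lt hij
  set y := List.ofFn fun t : Fin (d + 1) => s (i + t)
  have hsplit : (List.ofFn fun t : Fin (i + d + 1) => s t) =
      (List.ofFn fun t : Fin i => s t) ++ y := by
    have := ofFn_wcat (List.ofFn fun t : Fin i => s t) (fun t => s (i + t)) (d + 1)
    rwa [wcat_ofFn_shift, List.length_ofFn, ← add_assoc] at this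
  have hy : y ≠ [] := by simp [y]
  refine ⟨i, hi, y, hy, wcat_wpow_mem_safeObj (x := fun t => s (i + d + 1 + t)) hy
    (by rw [← hsplit]; exact heq.le) ?_⟩
  rwa [← hsplit, wcat_ofFn_shift]

theorem exists_wcat_wpow_mem_diff_safeObj {A : Set (List C)} (hreg : FinClasses (SafeObj A))
    {v v' : List C} {x : ℕ → C}
    (hx : x ∈ contAfter (SafeObj A) v \ contAfter (SafeObj A) v') :
    ∃ u y, y ≠ [] ∧ wcat u (wpow y) ∈ contAfter (SafeObj A) v \ contAfter (SafeObj A) v' := by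
  obtain ⟨hsafe, hreach⟩ := hx
  obtain ⟨p, hp⟩ : ∃ p, (List.ofFn fun i : Fin p => wcat v' x i) ∈ A := by
    simpa [contAfter, mem_safeObj] using hreach
  obtain ⟨i, hi, y, hy, hmem⟩ := exists_wcat_wpow_mem_safeObj hreg hsafe (v.length + p)
  obtain ⟨n, rfl⟩ := Nat.exists_eq_add_of_le (le_trans (Nat.le_add_right _ _) hi)
  set u := List.ofFn fun t : Fin n => x t
  have hux : ∀ i < u.length, wcat u (wpow y) i = x i := fun i hi => by
    rw [wcat_of_lt hi, List.getElem_ofFn]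
  refine ⟨u, y, hy, ?_, fun hsafe' => mem_safeObj.mp hsafe' p ?_⟩
  · rwa [ofFn_wcat, wcat_append] at hmem
  · rwa [ofFn_congr_of_forall_lt fun i hi => wcat_eq_of_forall_lt hux i ?_]
    simp only [u, List.length_ofFn]
    omega

theorem exists_wcat_wpow_mem_diff {A : Set (List C)} {W : Set (ℕ → C)}
    (hform : W = ReachObj A ∨ W = SafeObj A) (hreg : FinClasses W) {v v' : List C} {x : ℕ → C}
    (hx : x ∈ contAfter W v \ contAfter W v') :
    ∃ u y, y ≠ [] ∧ wcat u (wpow y) ∈ contAfter W v \ contAfter W v' := by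
  rcases hform with rfl | rfl
  · obtain ⟨u, y, hy, h, h'⟩ := exists_wcat_wpow_mem_diff_safeObj hreg.compl
      ⟨hx.2, not_not.mpr hx.1⟩
    exact ⟨u, y, hy, not_not.mp h', h⟩
  · exact exists_wcat_wpow_mem_diff_safeObj hreg hx

end Safety

section Lasso

/-- The position at time `n` on a lasso whose stem has length `k` and whose loop has length `p`. -/
def lassoIdx (k p n : ℕ) : ℕ := if n < k then n else k + (n - k) % p

theorem lassoIdx_lt {k p : ℕ} (hp : 0 < p) (n : ℕ) : lassoIdx k p n < k + p := by
  unfold lassoIdx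
  split_ifs
  · omega
  · have := Nat.mod_lt (n - k) hp
    omega

theorem lassoIdx_lassoIdx_add_one (k p n : ℕ) :
    lassoIdx k p (lassoIdx k p n + 1) = lassoIdx k p (n + 1) := by
  by_cases h : n < k
  · simp only [lassoIdx, if_pos h]
  · simp only [lassoIdx, if_neg h, if_neg (show ¬ n + 1 < k by omega),
      if_neg (show ¬ k + (n - k) % p + 1 < k by omega)]
    rw [show k + (n - k) % p + 1 - k = (n - k) % p + 1 by omega, Nat.mod_add_mod,
      show n + 1 - k = n - k + 1 by omega]

def lassoSucc (k : ℕ) {p : ℕ} (hp : 0 < p) (i : Fin (k + p)) : Fin (k + p) :=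
  ⟨lassoIdx k p (i + 1), lassoIdx_lt hp _⟩

theorem lassoSucc_iterate (k : ℕ) {p : ℕ} (hp : 0 < p) (n : ℕ) :
    (lassoSucc k hp)^[n] ⟨0, by omega⟩ = ⟨lassoIdx k p n, lassoIdx_lt hp n⟩ := by
  induction n with
  | zero =>
    refine Fin.ext ?_
    show 0 = lassoIdx k p 0
    unfold lassoIdx
    split_ifs with h
    · rfl
    · rw [Nat.eq_zero_of_not_pos h, Nat.zero_sub, Nat.zero_mod]
  | succ n ih =>
    rw [Function.iterate_succ_apply', ih]
    exact Fin.ext (lassoIdx_lassoIdx_add_one k p n)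

variable {α : Type*}

def PeriodicFrom (k p : ℕ) (x : ℕ → α) : Prop := ∀ n, k ≤ n → x (n + p) = x n

theorem PeriodicFrom.apply_lassoIdx {k p : ℕ} {x : ℕ → α} (hx : PeriodicFrom k p x) (n : ℕ) :
    x (lassoIdx k p n) = x n := by
  unfold lassoIdx
  split_ifs with h
  · rfl
  · have hper : Function.Periodic (fun i => x (k + i)) p := fun i => by
      simpa only [add_assoc] using hx (k + i) (by omega)
    rw [hper.map_mod_nat (n - k), Nat.add_sub_cancel' (by omega)]

theorem PeriodicFrom.of_succ_eq {β : Type*} {k p : ℕ} {x : ℕ → α} {μ : ℕ → β} {f : β → α → β}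
    (hx : PeriodicFrom k p x) (hμ : ∀ n, μ (n + 1) = f (μ n) (x n)) (h : μ (k + p) = μ k) :
    PeriodicFrom k p μ := by
  intro n hn
  induction n, hn using Nat.le_induction with
  | base => exact h
  | succ n hn ih => rw [show n + 1 + p = n + p + 1 by omega, hμ, hμ, ih, hx n hn]

theorem periodicFrom_wcat_wpow {C : Type} [Nonempty C] (a : List C) {b : List C} (hb : b ≠ []) :
    PeriodicFrom a.length b.length (wcat a (wpow b)) := by
  intro n hn
  rw [wcat_of_le hn, wcat_of_le (by omega),
    show n + b.length - a.length = n - a.length + b.length by omega, wpow_add_length hb]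

end Lasso

namespace Arena

variable {C : Type} {A : Arena C}

theorem endFrom_append_singleton (v : A.V) (l : List (A.V × C × A.V)) (e : A.V × C × A.V) :
    A.endFrom v (l ++ [e]) = e.2.2 := by
  induction l generalizing v with
  | nil => rfl
  | cons e' l ih => exact ih e'.2.2

theorem histFrom_append_singleton (v : A.V) (l : List (A.V × C × A.V)) (e : A.V × C × A.V) :
    A.HistFrom v (l ++ [e]) ↔ A.HistFrom v l ∧ e ∈ A.E ∧ e.1 = A.endFrom v l := by
  induction l generalizing v with
  | nil => simp [HistFrom, endFrom]
  | cons e' l ih =>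
    simp only [List.cons_append, HistFrom, endFrom, ih]
    tauto

theorem PlayFrom.endFrom_ofFn {v : A.V} {π : ℕ → A.V × C × A.V} (hπ : A.PlayFrom v π) :
    ∀ n, A.endFrom v (List.ofFn fun i : Fin n => π i) = (π n).1
  | 0 => hπ.1.symm
  | n + 1 => by
    rw [List.ofFn_succ', List.concat_eq_append, endFrom_append_singleton]
    exact (hπ.2 n).2

theorem PlayFrom.histFrom_ofFn {v : A.V} {π : ℕ → A.V × C × A.V} (hπ : A.PlayFrom v π) :
    ∀ n, A.HistFrom v (List.ofFn fun i : Fin n => π i)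
  | 0 => trivial
  | n + 1 => by
    rw [List.ofFn_succ', List.concat_eq_append, histFrom_append_singleton]
    exact ⟨hπ.histFrom_ofFn n, (hπ.2 n).1, (hπ.endFrom_ofFn n).symm⟩

def Strategy.BasedVia (σ : A.Strategy) (N : MemStruct C) (nxt : A.V → N.M → A.V × C × A.V) :
    Prop :=
  ∀ v l, A.HistFrom v l → A.P1 (A.endFrom v l) →
    σ.next v l = nxt (A.endFrom v l) (N.updStar N.init (l.map fun e => e.2.1))

theorem PlayFrom.next_ofFn_eq_of_basedVia {v : A.V} {π : ℕ → A.V × C × A.V}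
    (hπ : A.PlayFrom v π) {σ : A.Strategy} {N : MemStruct C} {nxt : A.V → N.M → A.V × C × A.V}
    (hnxt : σ.BasedVia N nxt) {n : ℕ} (hn : A.P1 (π n).1) :
    σ.next v (List.ofFn fun i : Fin n => π i) =
      nxt (π n).1 (N.updStar N.init (List.ofFn fun i : Fin n => playCol π i)) := by
  rw [hnxt _ _ (hπ.histFrom_ofFn n) (by rwa [hπ.endFrom_ofFn]), hπ.endFrom_ofFn, List.map_ofFn]
  rfl

/-- In a one-player arena every play is the only play consistent with a suitable strategy. -/
theorem exists_winningFrom_of_playFrom (h1 : A.OneP1) {v : A.V} {π : ℕ → A.V × C × A.V}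
    (hπ : A.PlayFrom v π) {W : Set (ℕ → C)} (hW : playCol π ∈ W) :
    ∃ σ : A.Strategy, σ.WinningFrom W v := by
  classical
  let σ : A.Strategy :=
    { next := fun v' l => if (π l.length).1 = A.endFrom v' l then π l.length
        else (A.succ _ (h1 (A.endFrom v' l))).choose
      legal := fun v' l _ _ => by
        split_ifs with h
        · exact ⟨(hπ.2 _).1, h⟩
        · exact (A.succ _ (h1 (A.endFrom v' l))).choose_spec }
  refine ⟨σ, fun π' _ hc => ?_⟩
  suffices π' = π by rwa [this]
  funext n
  induction n using Nat.strong_induction_on with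
  | _ n ih =>
    rw [hc n (h1 (A.endFrom v _)), ofFn_congr_of_forall_lt ih]
    simp only [σ, List.length_ofFn, hπ.endFrom_ofFn, if_true]

end Arena

/-- A deterministic colored graph with one extra edge `choice → exitTgt` of color `exitCol`. -/
structure ChoiceGraph (C : Type) where
  V : Type
  next : V → V
  col : V → C
  choice : V
  exitCol : C
  exitTgt : V

namespace ChoiceGraph

variable {C : Type} (G : ChoiceGraph C)

def edge (v : G.V) : G.V × C × G.V := (v, G.col v, G.next v)

def exitEdge : G.V × C × G.V := (G.choice, G.exitCol, G.exitTgt)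

abbrev arena : Arena C where
  V := G.V
  P1 _ := True
  E := Set.range G.edge ∪ {G.exitEdge}
  succ v _ := ⟨G.edge v, Or.inl ⟨v, rfl⟩, rfl⟩

theorem arena_isFinite [Finite G.V] : G.arena.IsFinite :=
  ⟨inferInstanceAs (Finite G.V), (Set.finite_range _).union (Set.finite_singleton _)⟩

theorem arena_oneP1 : G.arena.OneP1 := fun _ => trivial

theorem eq_edge_or_eq_exitEdge {e : G.V × C × G.V} (he : e ∈ G.arena.E) :
    e = G.edge e.1 ∨ e = G.exitEdge := by
  rcases he with ⟨v, rfl⟩ | he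
  · exact Or.inl rfl
  · exact Or.inr he

theorem eq_edge_of_mem {e : G.V × C × G.V} (he : e ∈ G.arena.E) (hne : e.1 ≠ G.choice) :
    e = G.edge e.1 :=
  (G.eq_edge_or_eq_exitEdge he).resolve_right fun h => hne (by rw [h]; rfl)

def run (v : G.V) (n : ℕ) : G.V × C × G.V := G.edge (G.next^[n] v)

def exitRun (v : G.V) (k n : ℕ) : G.V × C × G.V :=
  if n < k then G.run v n else if n = k then G.exitEdge else G.run G.exitTgt (n - (k + 1))

theorem run_fst (v : G.V) (n : ℕ) : (G.run v n).1 = G.next^[n] v := rfl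

theorem playCol_run (v : G.V) (n : ℕ) : Arena.playCol (G.run v) n = G.col (G.next^[n] v) := rfl

theorem playFrom_run (v : G.V) : G.arena.PlayFrom v (G.run v) :=
  ⟨rfl, fun n => ⟨Or.inl ⟨_, rfl⟩, (Function.iterate_succ_apply' G.next n v).symm⟩⟩

theorem playFrom_exitRun {v : G.V} {k : ℕ} (hk : G.next^[k] v = G.choice) :
    G.arena.PlayFrom v (G.exitRun v k) := by
  have hrun := G.playFrom_run
  refine ⟨?_, fun n => ⟨?_, ?_⟩⟩ <;> unfold exitRun
  · split_ifs with h₀ h₁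
    exacts [rfl, by subst h₁; exact hk.symm, by omega]
  · split_ifs
    exacts [((hrun v).2 n).1, Or.inr rfl, ((hrun _).2 _).1]
  · split_ifs with h₀ h₁ h₂ h₃ <;> try omega
    · exact ((hrun v).2 n).2
    · subst h₂
      exact (Function.iterate_succ_apply' G.next n v).symm.trans hk
    · rw [h₃, Nat.sub_self]
      rfl
    · rw [show n + 1 - (k + 1) = n - (k + 1) + 1 by omega]
      exact ((hrun _).2 _).2

theorem consistent_of_agree_at_choice {σ : G.arena.Strategy} {v : G.V}
    {π : ℕ → G.V × C × G.V} (hπ : G.arena.PlayFrom v π)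
    (h : ∀ n, (π n).1 = G.choice → π n = σ.next v (List.ofFn fun i : Fin n => π i)) :
    σ.Consistent v π := by
  intro n _
  by_cases hc : (π n).1 = G.choice
  · exact h n hc
  have hl := σ.legal v _ (hπ.histFrom_ofFn n) trivial
  rw [hπ.endFrom_ofFn] at hl
  rw [G.eq_edge_of_mem (hπ.2 n).1 hc, G.eq_edge_of_mem hl.1 (hl.2 ▸ hc), hl.2]

variable {G} {N : MemStruct C} {σ : G.arena.Strategy} {nxt : G.V → N.M → G.V × C × G.V}

theorem nxt_choice_eq_edge_or_eq_exitEdge (hnxt : σ.BasedVia N nxt) {v : G.V}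
    {π : ℕ → G.V × C × G.V} (hπ : G.arena.PlayFrom v π) {n : ℕ} (hn : (π n).1 = G.choice) :
    let m := N.updStar N.init (List.ofFn fun i : Fin n => Arena.playCol π i)
    nxt G.choice m = G.edge G.choice ∨ nxt G.choice m = G.exitEdge := by
  have hl := σ.legal v _ (hπ.histFrom_ofFn n) trivial
  rw [hπ.next_ofFn_eq_of_basedVia hnxt trivial, hπ.endFrom_ofFn, hn] at hl
  exact (G.eq_edge_or_eq_exitEdge hl.1).imp_left fun h => h.trans (congrArg G.edge hl.2)

theorem consistent_of_basedVia (hnxt : σ.BasedVia N nxt) {v : G.V} {π : ℕ → G.V × C × G.V}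
    (hπ : G.arena.PlayFrom v π) {m : N.M} (h : ∀ n, (π n).1 = G.choice →
      N.updStar N.init (List.ofFn fun i : Fin n => Arena.playCol π i) = m ∧
        π n = nxt G.choice m) :
    σ.Consistent v π :=
  consistent_of_agree_at_choice G hπ fun n hn => by
    obtain ⟨hm, he⟩ := h n hn
    rw [hπ.next_ofFn_eq_of_basedVia hnxt trivial, hn, hm, he]

end ChoiceGraph

section LassoGraph

variable {C : Type} {p₁ p₂ : ℕ}

abbrev lassoGraph (x₁ x₂ : ℕ → C) (k₁ k₂ : ℕ) (hp₁ : 0 < p₁) (hp₂ : 0 < p₂) : ChoiceGraph C where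
  V := Fin (k₁ + p₁) ⊕ Fin (k₂ + p₂)
  next := Sum.map (lassoSucc k₁ hp₁) (lassoSucc k₂ hp₂)
  col := Sum.elim (fun i => x₁ i) (fun j => x₂ j)
  choice := .inl ⟨k₁, by omega⟩
  exitCol := x₂ 0
  exitTgt := .inr (lassoSucc k₂ hp₂ ⟨0, by omega⟩)

variable (x₁ x₂ : ℕ → C) (k₁ k₂ : ℕ) (hp₁ : 0 < p₁) (hp₂ : 0 < p₂)

theorem lassoGraph_next_iterate_inl (n : ℕ) :
    (lassoGraph x₁ x₂ k₁ k₂ hp₁ hp₂).next^[n] (.inl ⟨0, by omega⟩) =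
      .inl ⟨lassoIdx k₁ p₁ n, lassoIdx_lt hp₁ n⟩ := by
  rw [← lassoSucc_iterate k₁ hp₁ n]
  exact (Function.Semiconj.iterate_right (f := Sum.inl) (fun _ => rfl) n _).symm

theorem lassoGraph_next_iterate_exitTgt (n : ℕ) :
    (lassoGraph x₁ x₂ k₁ k₂ hp₁ hp₂).next^[n] (lassoGraph x₁ x₂ k₁ k₂ hp₁ hp₂).exitTgt =
      .inr ⟨lassoIdx k₂ p₂ (n + 1), lassoIdx_lt hp₂ _⟩ := by
  rw [← lassoSucc_iterate k₂ hp₂, Function.iterate_succ_apply]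
  exact (Function.Semiconj.iterate_right (f := Sum.inr) (fun _ => rfl) n _).symm

theorem lassoGraph_next_iterate_eq_choice_iff (n : ℕ) :
    (lassoGraph x₁ x₂ k₁ k₂ hp₁ hp₂).next^[n] (.inl ⟨0, by omega⟩) =
      (lassoGraph x₁ x₂ k₁ k₂ hp₁ hp₂).choice ↔ lassoIdx k₁ p₁ n = k₁ := by
  rw [lassoGraph_next_iterate_inl x₁ x₂ k₁ k₂ hp₁ hp₂]
  simp [lassoGraph, Fin.ext_iff]

theorem lassoGraph_exitRun_fst_eq_choice {n : ℕ}
    (h : ((lassoGraph x₁ x₂ k₁ k₂ hp₁ hp₂).exitRun (.inl ⟨0, by omega⟩) k₁ n).1 =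
      (lassoGraph x₁ x₂ k₁ k₂ hp₁ hp₂).choice) : n = k₁ := by
  unfold ChoiceGraph.exitRun at h
  split_ifs at h with h₁ h₂
  · rw [ChoiceGraph.run_fst, lassoGraph_next_iterate_eq_choice_iff, lassoIdx, if_pos h₁] at h
    omega
  · exact h₂
  · rw [ChoiceGraph.run_fst, lassoGraph_next_iterate_exitTgt] at h
    cases h

theorem playCol_lassoGraph_run (hx₁ : PeriodicFrom k₁ p₁ x₁) :
    Arena.playCol ((lassoGraph x₁ x₂ k₁ k₂ hp₁ hp₂).run (.inl ⟨0, by omega⟩)) = x₁ := by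
  funext n
  rw [ChoiceGraph.playCol_run, lassoGraph_next_iterate_inl]
  exact hx₁.apply_lassoIdx n

theorem playCol_lassoGraph_exitRun (hx₁ : PeriodicFrom k₁ p₁ x₁) (hx₂ : PeriodicFrom k₂ p₂ x₂)
    (k : ℕ) :
    Arena.playCol ((lassoGraph x₁ x₂ k₁ k₂ hp₁ hp₂).exitRun (.inl ⟨0, by omega⟩) k) =
      wcat (List.ofFn fun i : Fin k => x₁ i) x₂ := by
  funext n
  rw [Arena.playCol, ChoiceGraph.exitRun]
  split_ifs with h₁ h₂
  · rw [wcat_of_lt (by simpa using h₁), List.getElem_ofFn]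
    exact congrFun (playCol_lassoGraph_run x₁ x₂ k₁ k₂ hp₁ hp₂ hx₁) n
  · rw [wcat_of_le (by rw [List.length_ofFn]; omega), List.length_ofFn, h₂, Nat.sub_self]
    rfl
  · rw [wcat_of_le (by rw [List.length_ofFn]; omega), List.length_ofFn]
    rw [← Arena.playCol, ChoiceGraph.playCol_run, lassoGraph_next_iterate_exitTgt]
    refine (hx₂.apply_lassoIdx _).trans (congrArg x₂ ?_)
    omega

end LassoGraph

section Pumping

variable {C : Type} {W : Set (ℕ → C)} {N : MemStruct C}

theorem mem_of_sufficesIn_of_periodicFrom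
    (hsuff : SufficesIn N W (fun A => A.IsFinite ∧ A.OneP1))
    {x₁ x₂ : ℕ → C} {k₁ p₁ k₂ p₂ : ℕ} (hp₁ : 0 < p₁) (hp₂ : 0 < p₂)
    (hx₁ : PeriodicFrom k₁ p₁ x₁) (hx₂ : PeriodicFrom k₂ p₂ x₂)
    (hmem : N.updStar N.init (List.ofFn fun i : Fin (k₁ + p₁) => x₁ i) =
      N.updStar N.init (List.ofFn fun i : Fin k₁ => x₁ i))
    (hwin : wcat (List.ofFn fun i : Fin (k₁ + p₁) => x₁ i) x₂ ∈ W)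
    (hlose : wcat (List.ofFn fun i : Fin k₁ => x₁ i) x₂ ∉ W) :
    x₁ ∈ W := by
  set G := lassoGraph x₁ x₂ k₁ k₂ hp₁ hp₂
  set v₀ : G.V := .inl ⟨0, by omega⟩
  set μ : ℕ → N.M := fun n => N.updStar N.init (List.ofFn fun i : Fin n => x₁ i)
  -- the memory along `x₁` inherits the period of `x₁`: the choice vertex is always met in `μ k₁`
  have hμ : PeriodicFrom k₁ p₁ μ := hx₁.of_succ_eq (N.updStar_ofFn_succ N.init x₁) hmem
  have hchoice := lassoGraph_next_iterate_eq_choice_iff x₁ x₂ k₁ k₂ hp₁ hp₂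
  have hcolrun := playCol_lassoGraph_run x₁ x₂ k₁ k₂ hp₁ hp₂ hx₁
  have hcolexit := playCol_lassoGraph_exitRun x₁ x₂ k₁ k₂ hp₁ hp₂ hx₁ hx₂
  obtain ⟨σ, ⟨nxt, hnxt⟩, hopt⟩ := hsuff G.arena ⟨G.arena_isFinite, G.arena_oneP1⟩
  have hσ : σ.WinningFrom W v₀ := by
    refine hopt v₀ (Arena.exists_winningFrom_of_playFrom G.arena_oneP1
      (G.playFrom_exitRun ((hchoice (k₁ + p₁)).mpr ?_)) (by rwa [hcolexit]))
    simp [lassoIdx]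
  have hrun := G.playFrom_run v₀
  have hk₁ : (G.run v₀ k₁).1 = G.choice := (hchoice k₁).mpr (by simp [lassoIdx])
  have hexitRun := G.playFrom_exitRun hk₁
  have hnxt_choice := ChoiceGraph.nxt_choice_eq_edge_or_eq_exitEdge hnxt hrun hk₁
  rw [hcolrun] at hnxt_choice
  rcases hnxt_choice with hloop | hexit
  · rw [← hcolrun]
    refine hσ _ hrun (ChoiceGraph.consistent_of_basedVia (m := μ k₁) hnxt hrun fun n hn => ⟨?_, ?_⟩)
    · rw [hcolrun]
      change μ n = μ k₁
      rw [← hμ.apply_lassoIdx n, (hchoice n).mp hn]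
    · rw [hloop, ← hn]
      rfl
  · refine absurd ?_ hlose
    rw [← hcolexit]
    refine hσ _ hexitRun
      (ChoiceGraph.consistent_of_basedVia (m := μ k₁) hnxt hexitRun fun n hn => ?_)
    rw [lassoGraph_exitRun_fst_eq_choice x₁ x₂ k₁ k₂ hp₁ hp₂ hn, hcolexit, ofFn_wcat_ofFn]
    refine ⟨rfl, ?_⟩
    rw [hexit, ChoiceGraph.exitRun, if_neg (lt_irrefl k₁), if_pos rfl]

theorem wcat_wpow_mem_of_sufficesIn [Nonempty C]
    (hsuff : SufficesIn N W (fun A => A.IsFinite ∧ A.OneP1))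
    {a b u y : List C} (hb : b ≠ []) (hy : y ≠ [])
    (hmem : N.updStar (N.updStar N.init a) b = N.updStar N.init a)
    (hwin : wcat (a ++ b) (wcat u (wpow y)) ∈ W) (hlose : wcat a (wcat u (wpow y)) ∉ W) :
    wcat a (wpow b) ∈ W := by
  have hab : (List.ofFn fun i : Fin (a.length + b.length) => wcat a (wpow b) i) = a ++ b := by
    rw [ofFn_wcat, ← wcat_wpow_self hb, ofFn_wcat_length]
  have ha := ofFn_wcat_length a (wpow b)
  refine mem_of_sufficesIn_of_periodicFrom hsuff (List.length_pos_iff.mpr hb)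
    (List.length_pos_iff.mpr hy) (periodicFrom_wcat_wpow a hb) (periodicFrom_wcat_wpow u hy)
    ?_ (by rwa [hab]) (by rwa [ha])
  rwa [hab, ha, MemStruct.updStar_append]

end Pumping

/-- for a regular reachability or safety objective `W`, if the memory
structure `N` suffices to play optimally for `W` in all finite one-player arenas of
Player 1, then `W` is `N`-progress-consistent. -/
theorem progressConsistency_necessary_regular {C : Type} [Nonempty C]
    (W : Set (ℕ → C))
    (hform : ∃ A : Set (List C), W = ReachObj A ∨ W = SafeObj A)
    (hreg : FinClasses W)
    (N : MemStruct C)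
    (hsuff : SufficesIn N W (fun A => A.IsFinite ∧ A.OneP1)) :
    ProgressConsistent N W := by
  intro m w₁ w₂ hm₁ hm₂ hlt
  have hw₂ : w₂ ≠ [] := by
    rintro rfl
    rw [List.append_nil] at hlt
    exact hlt.2 hlt.1
  obtain ⟨A, hA⟩ := hform
  obtain ⟨x, hx₁, hx₂⟩ := Set.not_subset.mp hlt.2
  obtain ⟨u, y, hy, hwin, hlose⟩ := exists_wcat_wpow_mem_diff hA hreg ⟨hx₁, hx₂⟩
  exact wcat_wpow_mem_of_sufficesIn hsuff hw₂ hy (by rw [hm₁, hm₂]) hwin hlose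

end RegularMemory
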